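/- arXiv:1410.5227 — 4 statements merged into one kernel-verified Lean document; each statement's English description precedes it below -/
import Mathlib

section
/- Let R be a commutative ring and N an n×m matrix over R with n > m. For any index tuples (i₁,…,i_{m−1}) ∈ {1,…,n}^{m−1} and (j₁,…,j_{m+1}) ∈ {1,…,n}^{m+1}, the Plücker relation holds: Σ_{a=1}^{m+1} (−1)^a · p_{i₁,…,i_{m−1},j_a} · p_{j₁,…,j_{a−1},j_{a+1},…,j_{m+1}} = 0. -/
/-- **Plücker relations.**  Let `N` be an `n × m` matrix over a commutative ring `R` with
`n > m` (here `m` is written as `m + 1` so that the row tuples make sense).  For a tuple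
`t : Fin (m+1) → Fin n` of row indices, `(N.submatrix t id).det` is the minor
`p_{t 0, …, t m}` determined by those rows.  For any tuples `(i₁,…,i_{m})` and
`(j₁,…,j_{m+2})` of row indices we have
`Σ_{a=1}^{m+2} (−1)^a p_{i₁,…,i_m,j_a} · p_{j₁,…,ĵ_a,…,j_{m+2}} = 0`,
where `ĵ_a` means that `j_a` is omitted (the indexing of `a` is zero-based in Lean,
whence the sign `(−1)^(a+1)`). -/
theorem plucker_relation {R : Type*} [CommRing R] (n m : ℕ) (hnm : m + 1 < n)
    (N : Matrix (Fin n) (Fin (m + 1)) R) (i : Fin m → Fin n) (j : Fin (m + 2) → Fin n) :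
    ∑ a : Fin (m + 2), (-1 : R) ^ ((a : ℕ) + 1)
        * (N.submatrix (Fin.snoc i (j a)) id).det
        * (N.submatrix (fun b => j (a.succAbove b)) id).det = 0 := by
  -- the bordered (m+2) × (m+2) matrix
  set p : Fin (m + 2) → R := fun a => (N.submatrix (Fin.snoc i (j a)) id).det with hp
  set M : Matrix (Fin (m + 2)) (Fin (m + 2)) R :=
    Matrix.of fun a => Fin.cons (p a) (fun b => N (j a) b) with hM
  -- cofactors of the row of `i`-minors
  set c : Fin (m + 1) → R :=
    fun b => (-1 : R) ^ (m + (b : ℕ)) * (N.submatrix i b.succAbove).det with hc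
  -- Laplace expansion of `p a` along its last row
  have hexp : ∀ a : Fin (m + 2), p a = ∑ b : Fin (m + 1), c b * N (j a) b := by
    intro a
    show (N.submatrix (Fin.snoc i (j a)) id).det = _
    rw [Matrix.det_succ_row (N.submatrix (Fin.snoc i (j a)) id) (Fin.last m)]
    refine Finset.sum_congr rfl fun b _ => ?_
    have h1 : (N.submatrix (Fin.snoc i (j a)) id).submatrix (Fin.last m).succAbove b.succAbove
        = N.submatrix i b.succAbove := by
      ext r s
      simp [Fin.succAbove_last, Fin.snoc_castSucc]
    rw [h1]
    simp [hc, Fin.snoc_last]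
    ring
  -- the first column of `M` is a combination of the other columns, so `det M = 0`
  have hdet : M.det = 0 := by
    set c' : Fin (m + 2) → R := Fin.cons 0 c with hc'
    have h2 : M.updateCol 0 (fun a => ∑ k, c' k • M a k) = M := by
      have h3 : ∀ a, (∑ k, c' k • M a k) = M a 0 := by
        intro a
        rw [Fin.sum_univ_succ]
        simp only [hc', hM, Fin.cons_zero, Fin.cons_succ, Matrix.of_apply, smul_eq_mul,
          zero_mul, zero_add]
        exact (hexp a).symm
      rw [show (fun a => ∑ k, c' k • M a k) = fun a => M a 0 from funext h3]
      exact Matrix.updateCol_eq_self M 0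
    have := Matrix.det_updateCol_sum M 0 c'
    rw [h2] at this
    simpa [hc'] using this
  -- Laplace expansion of `det M` along the first column gives the Plücker sum
  rw [Matrix.det_succ_column_zero] at hdet
  have h4 : ∀ a : Fin (m + 2),
      M.submatrix a.succAbove Fin.succ = N.submatrix (fun b => j (a.succAbove b)) id := by
    intro a
    ext r s
    simp [hM]
  calc ∑ a : Fin (m + 2), (-1 : R) ^ ((a : ℕ) + 1) * (N.submatrix (Fin.snoc i (j a)) id).det
          * (N.submatrix (fun b => j (a.succAbove b)) id).det
      = -∑ a : Fin (m + 2), (-1 : R) ^ ((a : ℕ)) * M a 0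
          * (M.submatrix a.succAbove Fin.succ).det := by
        rw [← Finset.sum_neg_distrib]
        refine Finset.sum_congr rfl fun a _ => ?_
        rw [h4 a]
        simp only [hM, Matrix.of_apply, Fin.cons_zero, pow_succ]
        ring
    _ = 0 := by rw [hdet, neg_zero]
end

section
/- For every i with 2 < i < 7 (i.e. i ∈ {3,4,5,6}), the identity γ_{12i7}·γ_{1234}^p = γ_{12i6}·γ_{1235}^p − γ_{12i5}·γ_{1245}^p + γ_{12i4}·γ_{1345}^p − γ_{12i3}·γ_{2345}^p holds in K. -/
noncomputable section

open MvPolynomial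

variable (p : ℕ) (K : Type*) [Field K]

/-- The 10×4 matrix Γ(M) whose rows are the Frobenius twists of the rows of M. -/
def Gam (M : Matrix (Fin 2) (Fin 4) K) : Matrix (Fin 10) (Fin 4) K :=
  fun i j => M ⟨i.val % 2, by omega⟩ j ^ p ^ (i.val / 2)

/-- γ_{abcd}(M): the determinant of the 4×4 matrix whose rows are rows
a, b, c, d (0-indexed) of Γ(M). -/
def gam (M : Matrix (Fin 2) (Fin 4) K) (a b c d : Fin 10) : K :=
  (Matrix.of ![Gam p K M a, Gam p K M b, Gam p K M c, Gam p K M d]).det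

/-- δ = y² − xz. -/
def del : MvPolynomial (Fin 3) K := X 1 ^ 2 - X 0 * X 2

/-- The action of the element (n₁,…,n₄) ∈ E = (ℤ/pℤ)⁴ on K[x,y,z]:
x ↦ x, y ↦ y + a·x, z ↦ z + 2a·y + (a²+b)·x where a = Σ nⱼ c₁ⱼ and b = Σ nⱼ c₂ⱼ. -/
def act [CharP K p] (M : Matrix (Fin 2) (Fin 4) K) (n : Fin 4 → ZMod p) :
    MvPolynomial (Fin 3) K →ₐ[K] MvPolynomial (Fin 3) K :=
  aeval ![X 0,
    X 1 + C (∑ j, (ZMod.castHom (dvd_refl p) K) (n j) * M 0 j) * X 0,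
    X 2 + C (2 * ∑ j, (ZMod.castHom (dvd_refl p) K) (n j) * M 0 j) * X 1
        + C ((∑ j, (ZMod.castHom (dvd_refl p) K) (n j) * M 0 j) ^ 2
             + ∑ j, (ZMod.castHom (dvd_refl p) K) (n j) * M 1 j) * X 0]

/-- The invariant ring K[x,y,z]^E, as a set of polynomials. -/
def invariants [CharP K p] (M : Matrix (Fin 2) (Fin 4) K) : Set (MvPolynomial (Fin 3) K) :=
  {f | ∀ n : Fin 4 → ZMod p, act p K M n f = f}

/-- N_M(f): the product of the distinct elements of the E-orbit of f. -/
def NM [CharP K p] [NeZero p] (M : Matrix (Fin 2) (Fin 4) K) (f : MvPolynomial (Fin 3) K) :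
    MvPolynomial (Fin 3) K :=
  letI : DecidableEq (MvPolynomial (Fin 3) K) := Classical.decEq _
  (Finset.image (fun n : Fin 4 → ZMod p => act p K M n f) Finset.univ).prod id

set_option maxHeartbeats 4000000 in
lemma plucker4 {K : Type*} [Field K] (u1 u2 w r0 r1 r2 r3 r4 : Fin 4 → K) :
    (Matrix.of ![u1,u2,w,r4]).det * (Matrix.of ![r0,r1,r2,r3]).det
      = (Matrix.of ![u1,u2,w,r3]).det * (Matrix.of ![r0,r1,r2,r4]).det
        - (Matrix.of ![u1,u2,w,r2]).det * (Matrix.of ![r0,r1,r3,r4]).det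
        + (Matrix.of ![u1,u2,w,r1]).det * (Matrix.of ![r0,r2,r3,r4]).det
        - (Matrix.of ![u1,u2,w,r0]).det * (Matrix.of ![r1,r2,r3,r4]).det := by
  simp [Matrix.det_succ_row_zero, Fin.sum_univ_succ,
    show (Fin.succ 2 : Fin 4) = 3 from rfl,
    show (Fin.succAbove (2:Fin 4) (2:Fin 3)) = 3 from rfl,
    show (Fin.succAbove (1:Fin 4) (2:Fin 3)) = 3 from rfl,
    show (Fin.castSucc (2:Fin 3) : Fin 4) = 2 from rfl,
    show (Fin.succAbove (3:Fin 4) (2:Fin 3)) = 2 from rfl]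
  ring

lemma Gam_pow_row [Fact p.Prime] [CharP K p] (M : Matrix (Fin 2) (Fin 4) K)
    (a a' : Fin 10) (h : (a' : ℕ) = (a : ℕ) + 2) (j : Fin 4) :
    Gam p K M a j ^ p = Gam p K M a' j := by
  have h1 : (a' : ℕ) % 2 = (a : ℕ) % 2 := by omega
  have h2 : (a' : ℕ) / 2 = (a : ℕ) / 2 + 1 := by omega
  simp only [Gam, h1, h2, ← pow_mul, pow_succ]

lemma gam_pow [Fact p.Prime] [CharP K p] (M : Matrix (Fin 2) (Fin 4) K)
    (a b c d a' b' c' d' : Fin 10)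
    (ha : (a' : ℕ) = (a : ℕ) + 2) (hb : (b' : ℕ) = (b : ℕ) + 2)
    (hc : (c' : ℕ) = (c : ℕ) + 2) (hd : (d' : ℕ) = (d : ℕ) + 2) :
    gam p K M a b c d ^ p = gam p K M a' b' c' d' := by
  haveI : ExpChar K p := ExpChar.prime (Fact.out)
  have : gam p K M a b c d ^ p = frobenius K p (gam p K M a b c d) := rfl
  rw [this, gam, RingHom.map_det, gam]
  congr 1
  ext x j
  fin_cases x <;>
    simp [Matrix.map_apply, frobenius_def, Gam_pow_row p K M _ _ ha,
      Gam_pow_row p K M _ _ hb, Gam_pow_row p K M _ _ hc, Gam_pow_row p K M _ _ hd]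

/-- Lemma 1.4: for 2 < i < 7 (1-indexed paper indices; here `i : Fin 10` is the
0-indexed row, so the condition reads `2 < i+1 < 7`),
`γ_{12i7}·γ_{1234}^p = γ_{12i6}·γ_{1235}^p − γ_{12i5}·γ_{1245}^p + γ_{12i4}·γ_{1345}^p
 − γ_{12i3}·γ_{2345}^p`. -/

theorem first_plucker [Fact p.Prime] (hodd : Odd p) [CharP K p]
    (M : Matrix (Fin 2) (Fin 4) K) (i : Fin 10)
    (h2i : 2 < (i : ℕ) + 1) (hi7 : (i : ℕ) + 1 < 7) :
    gam p K M 0 1 i 6 * gam p K M 0 1 2 3 ^ p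
      = gam p K M 0 1 i 5 * gam p K M 0 1 2 4 ^ p
        - gam p K M 0 1 i 4 * gam p K M 0 1 3 4 ^ p
        + gam p K M 0 1 i 3 * gam p K M 0 2 3 4 ^ p
        - gam p K M 0 1 i 2 * gam p K M 1 2 3 4 ^ p := by
  rw [gam_pow p K M 0 1 2 3 2 3 4 5 rfl rfl rfl rfl,
      gam_pow p K M 0 1 2 4 2 3 4 6 rfl rfl rfl rfl,
      gam_pow p K M 0 1 3 4 2 3 5 6 rfl rfl rfl rfl,
      gam_pow p K M 0 2 3 4 2 4 5 6 rfl rfl rfl rfl,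
      gam_pow p K M 1 2 3 4 3 4 5 6 rfl rfl rfl rfl]
  exact plucker4 (Gam p K M 0) (Gam p K M 1) (Gam p K M i) (Gam p K M 2)
    (Gam p K M 3) (Gam p K M 4) (Gam p K M 5) (Gam p K M 6)
end
end

section
/- For every 2×4 matrix M over K, the polynomial f₁ is invariant under the action of E; that is, every element of E fixes f₁ := γ₁₂₃₄ y^{p²} + γ₁₂₃₅ δ^p x^{p²−2p} + γ₁₂₄₅ y^p x^{p²−p} + γ₁₃₄₅ δ x^{p²−2} + γ₂₃₄₅ y x^{p²−1}. -/
noncomputable section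

open MvPolynomial

variable (p : ℕ) (K : Type*) [Field K]

/-- f₁ = γ₁₂₃₄ y^{p²} + γ₁₂₃₅ δ^p x^{p²−2p} + γ₁₂₄₅ y^p x^{p²−p}
       + γ₁₃₄₅ δ x^{p²−2} + γ₂₃₄₅ y x^{p²−1}. -/
def f1 (M : Matrix (Fin 2) (Fin 4) K) : MvPolynomial (Fin 3) K :=
  C (gam p K M 0 1 2 3) * X 1 ^ p ^ 2
  + C (gam p K M 0 1 2 4) * del K ^ p * X 0 ^ (p ^ 2 - 2 * p)
  + C (gam p K M 0 1 3 4) * X 1 ^ p * X 0 ^ (p ^ 2 - p)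
  + C (gam p K M 0 2 3 4) * del K * X 0 ^ (p ^ 2 - 2)
  + C (gam p K M 1 2 3 4) * X 1 * X 0 ^ (p ^ 2 - 1)

/-- f₁₂₃₄₆ = −γ₁₂₃₄ δ^{p²} + γ₁₂₃₆ δ^p x^{2p²−2p} + γ₁₂₄₆ y^p x^{2p²−p}
           + γ₁₃₄₆ δ x^{2p²−2} + γ₂₃₄₆ y x^{2p²−1}. -/
def f12346 (M : Matrix (Fin 2) (Fin 4) K) : MvPolynomial (Fin 3) K :=
  - (C (gam p K M 0 1 2 3) * del K ^ p ^ 2)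
  + C (gam p K M 0 1 2 5) * del K ^ p * X 0 ^ (2 * p ^ 2 - 2 * p)
  + C (gam p K M 0 1 3 5) * X 1 ^ p * X 0 ^ (2 * p ^ 2 - p)
  + C (gam p K M 0 2 3 5) * del K * X 0 ^ (2 * p ^ 2 - 2)
  + C (gam p K M 1 2 3 5) * X 1 * X 0 ^ (2 * p ^ 2 - 1)


/-- Explicit formula for a 4×4 determinant. -/
lemma det_four {R : Type*} [CommRing R] (A : Matrix (Fin 4) (Fin 4) R) :
    A.det =
      A 0 0 * (A 1 1 * (A 2 2 * A 3 3 - A 2 3 * A 3 2) - A 1 2 * (A 2 1 * A 3 3 - A 2 3 * A 3 1)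
        + A 1 3 * (A 2 1 * A 3 2 - A 2 2 * A 3 1))
      - A 0 1 * (A 1 0 * (A 2 2 * A 3 3 - A 2 3 * A 3 2) - A 1 2 * (A 2 0 * A 3 3 - A 2 3 * A 3 0)
        + A 1 3 * (A 2 0 * A 3 2 - A 2 2 * A 3 0))
      + A 0 2 * (A 1 0 * (A 2 1 * A 3 3 - A 2 3 * A 3 1) - A 1 1 * (A 2 0 * A 3 3 - A 2 3 * A 3 0)
        + A 1 3 * (A 2 0 * A 3 1 - A 2 1 * A 3 0))
      - A 0 3 * (A 1 0 * (A 2 1 * A 3 2 - A 2 2 * A 3 1) - A 1 1 * (A 2 0 * A 3 2 - A 2 2 * A 3 0)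
        + A 1 2 * (A 2 0 * A 3 1 - A 2 1 * A 3 0)) := by
  have e1 : (Fin.succ 2 : Fin 4) = 3 := rfl
  have e3 : Fin.succAbove (2 : Fin 4) 2 = 3 := rfl
  have e4 : Fin.succAbove (1 : Fin 4) 2 = 3 := rfl
  have e5 : (Fin.castSucc 2 : Fin 4) = 2 := rfl
  have e6 : Fin.succAbove (3 : Fin 4) 2 = 2 := rfl
  rw [Matrix.det_succ_row_zero]
  simp [Fin.sum_univ_succ, Matrix.det_fin_three, Matrix.submatrix_apply, Fin.succ_zero_eq_one,
    e1, e3, e4, e5, e6]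
  ring

lemma Gam_apply (M : Matrix (Fin 2) (Fin 4) K) (i : Fin 10) (j : Fin 4) :
    Gam p K M i j = M ⟨i.val % 2, by omega⟩ j ^ p ^ (i.val / 2) := rfl

/-- The key determinantal identity:
γ₁₂₃₄ a^{p²} − γ₁₂₃₅ b^p + γ₁₂₄₅ a^p − γ₁₃₄₅ b + γ₂₃₄₅ a = 0. -/
lemma key [Fact p.Prime] [CharP K p] (M : Matrix (Fin 2) (Fin 4) K) (n : Fin 4 → ZMod p) :
    gam p K M 0 1 2 3 * (∑ j, (ZMod.castHom (dvd_refl p) K) (n j) * M 0 j) ^ p ^ 2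
    - gam p K M 0 1 2 4 * (∑ j, (ZMod.castHom (dvd_refl p) K) (n j) * M 1 j) ^ p
    + gam p K M 0 1 3 4 * (∑ j, (ZMod.castHom (dvd_refl p) K) (n j) * M 0 j) ^ p
    - gam p K M 0 2 3 4 * (∑ j, (ZMod.castHom (dvd_refl p) K) (n j) * M 1 j)
    + gam p K M 1 2 3 4 * (∑ j, (ZMod.castHom (dvd_refl p) K) (n j) * M 0 j) = 0 := by
  have hn : ∀ j k, ((ZMod.castHom (dvd_refl p) K) (n j)) ^ p ^ k
      = (ZMod.castHom (dvd_refl p) K) (n j) := by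
    intro j k
    rw [← map_pow, ZMod.pow_card_pow]
  have hsum : ∀ (i : Fin 2) (k : ℕ),
      (∑ j, (ZMod.castHom (dvd_refl p) K) (n j) * M i j) ^ p ^ k
      = ∑ j, (ZMod.castHom (dvd_refl p) K) (n j) * M i j ^ p ^ k := by
    intro i k
    rw [sum_pow_char_pow]
    refine Finset.sum_congr rfl fun j _ => ?_
    rw [mul_pow, hn]
  have h1 := hsum 0 1
  have h2 := hsum 0 2
  have h3 := hsum 1 1
  rw [pow_one] at h1 h3
  rw [h2, h1, h3]
  simp only [gam, det_four, Matrix.of_apply, Matrix.cons_val', Matrix.cons_val_zero,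
    Matrix.cons_val_one, Matrix.head_cons, Matrix.empty_val', Matrix.cons_val_fin_one,
    Matrix.head_fin_const, Matrix.cons_val_two, Matrix.tail_cons, Matrix.cons_val_three,
    Gam_apply, Fin.isValue]
  simp only [show ((0:Fin 10):ℕ)=0 from rfl, show ((1:Fin 10):ℕ)=1 from rfl,
    show ((2:Fin 10):ℕ)=2 from rfl, show ((3:Fin 10):ℕ)=3 from rfl,
    show ((4:Fin 10):ℕ)=4 from rfl, Nat.reduceMod, Nat.reduceDiv, Fin.mk_zero, Fin.mk_one,
    pow_zero, pow_one, Fin.sum_univ_four]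
  ring

/-- The generic polynomial computation behind the invariance of f₁. -/
lemma aux [Fact p.Prime] [CharP K p] (g1 g2 g3 g4 g5 A B : K)
    (hkey : g1 * A ^ p ^ 2 - g2 * B ^ p + g3 * A ^ p - g4 * B + g5 * A = 0) :
    C g1 * (X 1 + C A * X 0) ^ p ^ 2
    + C g2 * (del K - C B * X 0 ^ 2) ^ p * X 0 ^ (p ^ 2 - 2 * p)
    + C g3 * (X 1 + C A * X 0) ^ p * X 0 ^ (p ^ 2 - p)
    + C g4 * (del K - C B * X 0 ^ 2) * X 0 ^ (p ^ 2 - 2)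
    + C g5 * (X 1 + C A * X 0) * X 0 ^ (p ^ 2 - 1)
    = C g1 * X 1 ^ p ^ 2 + C g2 * del K ^ p * X 0 ^ (p ^ 2 - 2 * p)
    + C g3 * X 1 ^ p * X 0 ^ (p ^ 2 - p) + C g4 * del K * X 0 ^ (p ^ 2 - 2)
    + C g5 * X 1 * X 0 ^ (p ^ 2 - 1) := by
  have hp2 : 2 ≤ p := (Fact.out : p.Prime).two_le
  haveI : ExpChar (MvPolynomial (Fin 3) K) p := .prime Fact.out
  have E1 : (X 1 + C A * X 0 : MvPolynomial (Fin 3) K) ^ p ^ 2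
      = X 1 ^ p ^ 2 + C (A ^ p ^ 2) * X 0 ^ p ^ 2 := by
    rw [add_pow_expChar_pow, mul_pow, map_pow]
  have E1' : (X 1 + C A * X 0 : MvPolynomial (Fin 3) K) ^ p
      = X 1 ^ p + C (A ^ p) * X 0 ^ p := by
    rw [add_pow_expChar, mul_pow, map_pow]
  have E2 : (del K - C B * X 0 ^ 2) ^ p
      = del K ^ p - C (B ^ p) * X 0 ^ (2 * p) := by
    rw [sub_pow_expChar, mul_pow, map_pow, ← pow_mul]
  have hx1 : (X 0 : MvPolynomial (Fin 3) K) ^ (2 * p) * X 0 ^ (p ^ 2 - 2 * p)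
      = X 0 ^ p ^ 2 := by
    rw [← pow_add, Nat.add_sub_cancel' (by nlinarith : 2 * p ≤ p ^ 2)]
  have hx2 : (X 0 : MvPolynomial (Fin 3) K) ^ p * X 0 ^ (p ^ 2 - p) = X 0 ^ p ^ 2 := by
    rw [← pow_add, Nat.add_sub_cancel' (by nlinarith : p ≤ p ^ 2)]
  have hx3 : (X 0 : MvPolynomial (Fin 3) K) ^ 2 * X 0 ^ (p ^ 2 - 2) = X 0 ^ p ^ 2 := by
    rw [← pow_add, Nat.add_sub_cancel' (by nlinarith : 2 ≤ p ^ 2)]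
  have hx4 : (X 0 : MvPolynomial (Fin 3) K) * X 0 ^ (p ^ 2 - 1) = X 0 ^ p ^ 2 := by
    rw [← pow_succ', Nat.sub_add_cancel (by nlinarith : 1 ≤ p ^ 2)]
  have hkC : C g1 * C (A ^ p ^ 2) - C g2 * C (B ^ p) + C g3 * C (A ^ p)
      - C g4 * C B + C g5 * C A = (0 : MvPolynomial (Fin 3) K) := by
    have := congrArg (C (σ := Fin 3) (R := K)) hkey
    simpa only [map_add, map_sub, map_mul, map_zero] using this
  rw [E1, E2, E1']
  linear_combination (X 0 : MvPolynomial (Fin 3) K) ^ p ^ 2 * hkC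
    - C g2 * C (B ^ p) * hx1 + C g3 * C (A ^ p) * hx2 - C g4 * C B * hx3
    + C g5 * C A * hx4

/-- For every 2×4 matrix M over K, the polynomial f₁ is fixed by every element of E. -/
theorem f1_invariant [Fact p.Prime] (hodd : Odd p) [CharP K p]
    (M : Matrix (Fin 2) (Fin 4) K) :
    ∀ n : Fin 4 → ZMod p, act p K M n (f1 p K M) = f1 p K M := by
  intro n
  have hX0 : act p K M n (X 0) = X 0 := by simp [act]
  have hX1 : act p K M n (X 1)
      = X 1 + C (∑ j, (ZMod.castHom (dvd_refl p) K) (n j) * M 0 j) * X 0 := by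
    simp [act]
  have hX2 : act p K M n (X 2)
      = X 2 + C (2 * ∑ j, (ZMod.castHom (dvd_refl p) K) (n j) * M 0 j) * X 1
        + C ((∑ j, (ZMod.castHom (dvd_refl p) K) (n j) * M 0 j) ^ 2
             + ∑ j, (ZMod.castHom (dvd_refl p) K) (n j) * M 1 j) * X 0 := by
    simp [act]
  have hC : ∀ g : K, act p K M n (C g) = C g := fun g => by simp [act]
  have hdel : act p K M n (del K)
      = del K - C (∑ j, (ZMod.castHom (dvd_refl p) K) (n j) * M 1 j) * X 0 ^ 2 := by
    simp only [del, map_sub, map_mul, map_pow, hX0, hX1, hX2, map_add, map_ofNat]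
    ring
  simp only [f1, map_add, map_mul, map_pow, hC, hX1, hX0, hdel]
  exact aux p K _ _ _ _ _ _ _ (key p K M n)
end
end

section
/- If γ₁₂₃₄ ≠ 0, γ₁₂₃₅ = 0 and γ₁₃₅₇ ≠ 0, then γ₁₃₄₅ ≠ 0. -/
noncomputable section

open MvPolynomial

variable (p : ℕ) (K : Type*) [Field K]

/-- Lemma 5.1: if γ₁₂₃₄ ≠ 0, γ₁₂₃₅ = 0 and γ₁₃₅₇ ≠ 0, then γ₁₃₄₅ ≠ 0. -/
theorem gamma1345_ne_zero [Fact p.Prime] (hodd : Odd p) [CharP K p]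
    (M : Matrix (Fin 2) (Fin 4) K)
    (h1234 : gam p K M 0 1 2 3 ≠ 0) (h1235 : gam p K M 0 1 2 4 = 0)
    (h1357 : gam p K M 0 2 4 6 ≠ 0) :
    gam p K M 0 2 3 4 ≠ 0 := by
  classical
  unfold gam at h1234 h1235 h1357 ⊢
  set v0 := Gam p K M 0 with hv0d
  set v1 := Gam p K M 1 with hv1d
  set v2 := Gam p K M 2 with hv2d
  set v3 := Gam p K M 3 with hv3d
  set v4 := Gam p K M 4 with hv4d
  set v6 := Gam p K M 6 with hv6d
  set A : Matrix (Fin 4) (Fin 4) K := Matrix.of ![v0, v1, v2, v3] with hAd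
  have hu : IsUnit A.det := isUnit_iff_ne_zero.mpr h1234
  set w : Fin 4 → K := Matrix.vecMul v4 A⁻¹ with hwd
  have hvm : Matrix.vecMul w A = v4 := by
    rw [hwd, Matrix.vecMul_vecMul, Matrix.nonsing_inv_mul A hu, Matrix.vecMul_one]
  have hsum : v4 = ∑ i, w i • A i := by
    funext j
    rw [← hvm]
    simp [Matrix.vecMul, dotProduct, Finset.sum_apply]
  -- coefficient w 3 vanishes
  have hE1 : (Matrix.of ![v0, v1, v2, v4]) = A.updateRow 3 (∑ i, w i • A i) := by
    rw [← hsum]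
    ext i j
    fin_cases i <;> simp [hAd, Matrix.updateRow_apply]
  have hw3 : w 3 = 0 := by
    rw [hE1, Matrix.det_updateRow_sum, smul_eq_mul] at h1235
    exact (mul_eq_zero.mp h1235).resolve_right h1234
  -- the permuted matrix B
  set B : Matrix (Fin 4) (Fin 4) K := Matrix.of ![v0, v2, v3, v1] with hBd
  have hBdet : B.det = A.det := by
    set s : Equiv.Perm (Fin 4) := Equiv.swap (1 : Fin 4) 2 * Equiv.swap (2 : Fin 4) 3 with hsd
    have hs0 : s 0 = 0 := by decide
    have hs1 : s 1 = 2 := by decide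
    have hs2 : s 2 = 3 := by decide
    have hs3 : s 3 = 1 := by decide
    have hs : B = A.submatrix s id := by
      ext i j
      fin_cases i <;>
        simp [hAd, hBd, Matrix.submatrix_apply, hs0, hs1, hs2, hs3]
    rw [hs, Matrix.det_permute]
    have h12 : (1 : Fin 4) ≠ 2 := by decide
    have h23 : (2 : Fin 4) ≠ 3 := by decide
    rw [hsd, map_mul, Equiv.Perm.sign_swap h12, Equiv.Perm.sign_swap h23]
    simp
  have hsum' : v4 = ∑ i, (![w 0, w 2, w 3, w 1]) i • B i := by
    funext j
    have h := congrFun hsum j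
    rw [h]
    simp only [Finset.sum_apply, Fin.sum_univ_four, Pi.smul_apply, smul_eq_mul, hAd, hBd,
      Matrix.of_apply, Matrix.cons_val_zero, Matrix.cons_val_one, Matrix.head_cons,
      Matrix.cons_val_two, Matrix.tail_cons, Matrix.cons_val_three]
    ring
  have hE2 : (Matrix.of ![v0, v2, v3, v4])
      = B.updateRow 3 (∑ i, (![w 0, w 2, w 3, w 1]) i • B i) := by
    rw [← hsum']
    ext i j
    fin_cases i <;> simp [hBd, Matrix.updateRow_apply]
  rw [hE2, Matrix.det_updateRow_sum, hBdet]
  simp only [Matrix.cons_val_three, Matrix.tail_cons, Matrix.head_cons, smul_eq_mul]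
  intro hcontra
  have hw1 : w 1 = 0 := (mul_eq_zero.mp hcontra).resolve_right h1234
  -- now v4 = w0 • v0 + w2 • v2, so rows v0, v2, v4 are dependent
  have hv4 : ∀ j, v4 j = w 0 * v0 j + w 2 * v2 j := by
    intro j
    have := congrFun hsum j
    rw [this]
    simp only [Finset.sum_apply, Fin.sum_univ_four, Pi.smul_apply, smul_eq_mul, hw1, hw3,
      zero_mul, add_zero, hAd, Matrix.of_apply, Matrix.cons_val_zero, Matrix.cons_val_one,
      Matrix.head_cons, Matrix.cons_val_two, Matrix.tail_cons]
  set C : Matrix (Fin 4) (Fin 4) K := Matrix.of ![v0, v2, v4, v6] with hCd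
  have hC2 : C 2 = ∑ i, (![w 0, w 2, 0, 0]) i • C i := by
    funext j
    simp only [hCd, Finset.sum_apply, Fin.sum_univ_four, Pi.smul_apply, smul_eq_mul,
      Matrix.of_apply, Matrix.cons_val_zero, Matrix.cons_val_one, Matrix.head_cons,
      Matrix.cons_val_two, Matrix.tail_cons, Matrix.cons_val_three, zero_mul, add_zero]
    exact hv4 j
  have hCdet : C.det = 0 := by
    conv_lhs => rw [← Matrix.updateRow_eq_self C 2, hC2]
    rw [Matrix.det_updateRow_sum]
    simp
  exact h1357 hCdet
end
end
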